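/- arXiv:1808.10589 — 2 statements merged into one kernel-verified Lean document; each statement's English description precedes it below -/
import Mathlib

section
/- For all real x, y with |x| < 1/4, |y| < 1/4 and x ≠ y, the double series Σ_{r,s ≥ 1} (−1)^{r+s−1} C_{r+s−1} x^r y^s converges absolutely and equals 1/2 + (y·√(1+4x) − x·√(1+4y)) / (2(x−y)). -/
/-!
Write `c(t) = ∑ Cₙ tⁿ`. The Catalan recursion is the Cauchy-product identity `c = 1 + t c²`, and
the bound `|c(t)| ≤ ∑ Cₙ 4⁻ⁿ ≤ 2` (the partial sums are `2 - 2 binom(2N,N) / 4ᴺ`) selects the root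
`1 - 2 t c(t) = √(1 - 4t)`. Grouping the absolutely convergent double series along the diagonals
`r + s = n + 2`, the inner sums are `(-1)ⁿ⁺¹ Cₙ₊₁ xy (xⁿ⁺¹ - yⁿ⁺¹) / (x - y)`, so the series
equals `xy (c(-x) - c(-y)) / (x - y)`, which is the stated closed form.
-/

open Finset

lemma catalan_le_four_pow (n : ℕ) : catalan n ≤ 4 ^ n :=
  calc catalan n ≤ (n + 1) * catalan n := Nat.le_mul_of_pos_left _ n.succ_pos
    _ = n.centralBinom := succ_mul_catalan_eq_centralBinom n
    _ ≤ 4 ^ n := Nat.centralBinom_le_four_pow n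

lemma sum_range_catalan_div_four_pow (N : ℕ) :
    ∑ n ∈ range N, (catalan n : ℝ) / 4 ^ n = 2 - 2 * N.centralBinom / 4 ^ N := by
  induction N with
  | zero => simp
  | succ N ih =>
    have hcentral :
        ((N + 1 : ℕ) : ℝ) * (N + 1).centralBinom = 2 * (2 * N + 1) * N.centralBinom := by
      exact_mod_cast Nat.succ_mul_centralBinom_succ N
    have hcatalan : ((N + 1 : ℕ) : ℝ) * catalan N = N.centralBinom := by
      exact_mod_cast succ_mul_catalan_eq_centralBinom N
    push_cast at hcentral hcatalan
    rw [sum_range_succ, ih]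
    have hN : (N : ℝ) + 1 ≠ 0 := by positivity
    field_simp
    apply mul_left_cancel₀ hN
    linear_combination (2 * 4 ^ N : ℝ) * hcentral + (4 * 4 ^ N : ℝ) * hcatalan

lemma summable_catalan_mul_pow_of_nonneg {s : ℝ} (hs₀ : 0 ≤ s) (hs : s < 1 / 4) :
    Summable fun n ↦ (catalan n : ℝ) * s ^ n := by
  refine .of_nonneg_of_le (fun n ↦ by positivity) (fun n ↦ ?_)
    (summable_geometric_of_lt_one (by positivity : 0 ≤ 4 * s) (by linarith))
  rw [mul_pow]
  gcongr
  exact_mod_cast catalan_le_four_pow n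

lemma tsum_catalan_mul_pow_le_two {s : ℝ} (hs₀ : 0 ≤ s) (hs : s < 1 / 4) :
    ∑' n, (catalan n : ℝ) * s ^ n ≤ 2 := by
  refine (summable_catalan_mul_pow_of_nonneg hs₀ hs).tsum_le_of_sum_range_le fun N ↦ ?_
  calc ∑ n ∈ range N, (catalan n : ℝ) * s ^ n ≤ ∑ n ∈ range N, (catalan n : ℝ) / 4 ^ n := by
        gcongr with n
        rw [div_eq_mul_inv, ← inv_pow]
        gcongr
        linarith
    _ ≤ 2 := by
        rw [sum_range_catalan_div_four_pow]
        linarith [show (0 : ℝ) ≤ 2 * N.centralBinom / 4 ^ N by positivity]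

section CatalanGF

variable {R : Type*} [NormedCommRing R] [NormOneClass R] {t : R}

lemma norm_catalan_mul_pow_le (n : ℕ) (t : R) :
    ‖(catalan n : R) * t ^ n‖ ≤ catalan n * ‖t‖ ^ n :=
  calc ‖(catalan n : R) * t ^ n‖ ≤ ‖(catalan n : R)‖ * ‖t ^ n‖ := norm_mul_le _ _
    _ ≤ catalan n * ‖t‖ ^ n := by
      gcongr
      · simpa using Nat.norm_cast_le (α := R) (catalan n)
      · exact norm_pow_le _ _

lemma summable_norm_catalan_mul_pow (ht : ‖t‖ < 1 / 4) :
    Summable fun n ↦ ‖(catalan n : R) * t ^ n‖ :=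
  .of_nonneg_of_le (fun _ ↦ norm_nonneg _) (norm_catalan_mul_pow_le · t)
    (summable_catalan_mul_pow_of_nonneg (norm_nonneg t) ht)

noncomputable def catalanGF (t : R) : R := ∑' n, (catalan n : R) * t ^ n

lemma norm_catalanGF_le_two (ht : ‖t‖ < 1 / 4) : ‖catalanGF t‖ ≤ 2 :=
  (tsum_of_norm_bounded (summable_catalan_mul_pow_of_nonneg (norm_nonneg t) ht).hasSum
    (norm_catalan_mul_pow_le · t)).trans (tsum_catalan_mul_pow_le_two (norm_nonneg t) ht)

variable [CompleteSpace R]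

lemma tsum_catalan_succ_mul_pow_succ (ht : ‖t‖ < 1 / 4) :
    ∑' n, (catalan (n + 1) : R) * t ^ (n + 1) = catalanGF t - 1 := by
  rw [catalanGF, (summable_norm_catalan_mul_pow ht).of_norm.tsum_eq_zero_add]
  simp

lemma catalanGF_eq_one_add_mul_sq (ht : ‖t‖ < 1 / 4) :
    catalanGF t = 1 + t * catalanGF t ^ 2 := by
  have hnorm := summable_norm_catalan_mul_pow ht
  have hcauchy : t * catalanGF t ^ 2 = ∑' n, (catalan (n + 1) : R) * t ^ (n + 1) := by
    rw [sq, catalanGF, tsum_mul_tsum_eq_tsum_sum_antidiagonal_of_summable_norm hnorm hnorm,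
      ← (summable_norm_sum_mul_antidiagonal_of_summable_norm hnorm hnorm).of_norm.tsum_mul_left]
    refine tsum_congr fun n ↦ ?_
    rw [catalan_succ', Nat.cast_sum, sum_mul, mul_sum]
    refine sum_congr rfl fun kl hkl ↦ ?_
    rw [← mem_antidiagonal.mp hkl]
    push_cast
    ring
  rw [hcauchy, tsum_catalan_succ_mul_pow_succ ht]
  ring

end CatalanGF

lemma sqrt_one_sub_four_mul {t : ℝ} (ht : |t| < 1 / 4) :
    √(1 - 4 * t) = 1 - 2 * t * catalanGF t := by
  have hbound : |t * catalanGF t| ≤ 1 / 2 := by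
    have := norm_catalanGF_le_two (R := ℝ) ht
    rw [Real.norm_eq_abs] at this
    rw [abs_mul]
    nlinarith [abs_nonneg t, abs_nonneg (catalanGF t)]
  have hnonneg : 0 ≤ 1 - 2 * t * catalanGF t := by linarith [le_abs_self (t * catalanGF t)]
  rw [show 1 - 4 * t = (1 - 2 * t * catalanGF t) ^ 2 by
    linear_combination 4 * t * catalanGF_eq_one_add_mul_sq (R := ℝ) ht, Real.sqrt_sq hnonneg]

lemma sub_mul_sum_antidiagonal_pow_succ_mul_pow_succ {R : Type*} [CommRing R] (x y : R) (n : ℕ) :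
    (x - y) * ∑ kl ∈ antidiagonal n, x ^ (kl.1 + 1) * y ^ (kl.2 + 1) =
      x * y * (x ^ (n + 1) - y ^ (n + 1)) := by
  rw [← (Commute.all x y).mul_geom_sum₂, Nat.sum_antidiagonal_eq_sum_range_succ
    (fun k l ↦ x ^ (k + 1) * y ^ (l + 1)), mul_sum, mul_sum, mul_sum]
  refine sum_congr rfl fun k _ ↦ ?_
  rw [Nat.add_sub_cancel]
  ring

theorem Summable.tsum_eq_tsum_sum_antidiagonal {A α : Type*} [AddCommMonoid A] [HasAntidiagonal A]
    [AddCommMonoid α] [TopologicalSpace α] [ContinuousAdd α] [T3Space α] {f : A × A → α}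
    (hf : Summable f) : ∑' p, f p = ∑' n, ∑ p ∈ antidiagonal n, f p := by
  conv_rhs => congr; ext; rw [← sum_finset_coe, ← tsum_fintype (L := .unconditional _)]
  rw [← HasAntidiagonal.sigmaAntidiagonalEquivProd.tsum_eq f]
  exact (HasAntidiagonal.sigmaAntidiagonalEquivProd.summable_iff.mpr hf).tsum_sigma'
    fun n ↦ (hasSum_fintype _).summable

section DoubleSeries

variable {𝕜 : Type*} [NormedField 𝕜] {x y : 𝕜}

def catalanDoubleTerm (x y : 𝕜) (rs : ℕ × ℕ) : 𝕜 :=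
  (-1) ^ (rs.1 + rs.2 + 1) * (catalan (rs.1 + rs.2 + 1) : 𝕜) * x ^ (rs.1 + 1) * y ^ (rs.2 + 1)

lemma norm_catalanDoubleTerm_le (x y : 𝕜) (rs : ℕ × ℕ) :
    ‖catalanDoubleTerm x y rs‖ ≤ (4 * ‖x‖) ^ (rs.1 + 1) * (4 * ‖y‖) ^ (rs.2 + 1) := by
  have hcatalan : (catalan (rs.1 + rs.2 + 1) : ℝ) ≤ 4 ^ (rs.1 + 1) * 4 ^ (rs.2 + 1) := by
    rw [← pow_add]
    exact_mod_cast (catalan_le_four_pow _).trans (Nat.pow_le_pow_right (by norm_num) (by omega))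
  have hnorm : ‖(catalan (rs.1 + rs.2 + 1) : 𝕜)‖ ≤ catalan (rs.1 + rs.2 + 1) := by
    simpa using Nat.norm_cast_le (α := 𝕜) (catalan (rs.1 + rs.2 + 1))
  calc ‖catalanDoubleTerm x y rs‖
      = ‖(catalan (rs.1 + rs.2 + 1) : 𝕜)‖ * ‖x‖ ^ (rs.1 + 1) * ‖y‖ ^ (rs.2 + 1) := by
        simp [catalanDoubleTerm]
    _ ≤ 4 ^ (rs.1 + 1) * 4 ^ (rs.2 + 1) * ‖x‖ ^ (rs.1 + 1) * ‖y‖ ^ (rs.2 + 1) := by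
        gcongr
        exact hnorm.trans hcatalan
    _ = (4 * ‖x‖) ^ (rs.1 + 1) * (4 * ‖y‖) ^ (rs.2 + 1) := by ring

lemma summable_norm_catalanDoubleTerm (hx : ‖x‖ < 1 / 4) (hy : ‖y‖ < 1 / 4) :
    Summable fun rs ↦ ‖catalanDoubleTerm x y rs‖ := by
  have geometric {t : 𝕜} (ht : ‖t‖ < 1 / 4) : Summable fun n : ℕ ↦ (4 * ‖t‖) ^ (n + 1) :=
    (summable_geometric_of_lt_one (by positivity) (by linarith)).comp_injective
      (add_left_injective 1)
  exact .of_nonneg_of_le (fun _ ↦ norm_nonneg _) (norm_catalanDoubleTerm_le x y)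
    ((geometric hx).mul_of_nonneg (geometric hy) (fun _ ↦ by positivity) fun _ ↦ by positivity)

lemma sub_mul_sum_antidiagonal_catalanDoubleTerm (x y : 𝕜) (n : ℕ) :
    (x - y) * ∑ rs ∈ antidiagonal n, catalanDoubleTerm x y rs =
      x * y * ((catalan (n + 1) : 𝕜) * (-x) ^ (n + 1) -
        (catalan (n + 1) : 𝕜) * (-y) ^ (n + 1)) := by
  have hterm : ∀ rs ∈ antidiagonal n, catalanDoubleTerm x y rs =
      (-1) ^ (n + 1) * (catalan (n + 1) : 𝕜) * (x ^ (rs.1 + 1) * y ^ (rs.2 + 1)) := by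
    intro rs hrs
    rw [catalanDoubleTerm, mem_antidiagonal.mp hrs]
    ring
  rw [sum_congr rfl hterm, ← mul_sum, mul_left_comm,
    sub_mul_sum_antidiagonal_pow_succ_mul_pow_succ, neg_pow x, neg_pow y]
  ring

variable [CompleteSpace 𝕜]

lemma sub_mul_tsum_catalanDoubleTerm (hx : ‖x‖ < 1 / 4) (hy : ‖y‖ < 1 / 4) :
    (x - y) * ∑' rs, catalanDoubleTerm x y rs = x * y * (catalanGF (-x) - catalanGF (-y)) := by
  have hx' : ‖-x‖ < 1 / 4 := by rwa [norm_neg]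
  have hy' : ‖-y‖ < 1 / 4 := by rwa [norm_neg]
  have tail_summable {t : 𝕜} (ht : ‖t‖ < 1 / 4) :
      Summable fun n ↦ (catalan (n + 1) : 𝕜) * t ^ (n + 1) :=
    (summable_norm_catalan_mul_pow ht).of_norm.comp_injective (add_left_injective 1)
  rw [(summable_norm_catalanDoubleTerm hx hy).of_norm.tsum_eq_tsum_sum_antidiagonal,
    ← tsum_mul_left, tsum_congr (sub_mul_sum_antidiagonal_catalanDoubleTerm x y), tsum_mul_left,
    (tail_summable hx').tsum_sub (tail_summable hy'), tsum_catalan_succ_mul_pow_succ hx',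
    tsum_catalan_succ_mul_pow_succ hy']
  ring

end DoubleSeries

/-- for `|x| < 1/4`, `|y| < 1/4`, `x ≠ y`, the double series
`Σ_{r,s ≥ 1} (−1)^{r+s−1} C_{r+s−1} x^r y^s` (indexed here by `r = rs.1 + 1`,
`s = rs.2 + 1`) converges absolutely and equals
`1/2 + (y√(1+4x) − x√(1+4y)) / (2(x−y))`. -/
theorem stmt13 (x y : ℝ) (hx : |x| < 1 / 4) (hy : |y| < 1 / 4) (hxy : x ≠ y) :
    Summable (fun rs : ℕ × ℕ =>
      |(-1 : ℝ) ^ (rs.1 + rs.2 + 1) * (catalan (rs.1 + rs.2 + 1) : ℝ) *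
        x ^ (rs.1 + 1) * y ^ (rs.2 + 1)|) ∧
    (∑' rs : ℕ × ℕ, (-1 : ℝ) ^ (rs.1 + rs.2 + 1) * (catalan (rs.1 + rs.2 + 1) : ℝ) *
        x ^ (rs.1 + 1) * y ^ (rs.2 + 1)) =
      1 / 2 + (y * Real.sqrt (1 + 4 * x) - x * Real.sqrt (1 + 4 * y)) / (2 * (x - y)) := by
  have hx' : |-x| < 1 / 4 := by rwa [abs_neg]
  have hy' : |-y| < 1 / 4 := by rwa [abs_neg]
  have hsum : ∑' rs, catalanDoubleTerm x y rs =
      x * y * (catalanGF (-x) - catalanGF (-y)) / (x - y) := by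
    rw [eq_div_iff (sub_ne_zero.mpr hxy), mul_comm]
    exact sub_mul_tsum_catalanDoubleTerm (𝕜 := ℝ) hx hy
  refine ⟨summable_norm_catalanDoubleTerm (𝕜 := ℝ) hx hy, ?_⟩
  rw [show 1 + 4 * x = 1 - 4 * -x by ring, show 1 + 4 * y = 1 - 4 * -y by ring,
    sqrt_one_sub_four_mul hx', sqrt_one_sub_four_mul hy']
  change ∑' rs, catalanDoubleTerm x y rs = _
  rw [hsum]
  field_simp [sub_ne_zero.mpr hxy]
  ring
end

section
/- Define, for real x, y with |x| < 1/4, |y| < 1/4 and x ≠ y, f(x,y) := xy·(1 + 2x + 2y − √(1+4x)·√(1+4y)) / (2·√(1+4x)·√(1+4y)·(x−y)²). Then f has the absolutely convergent expansion f(x,y) = Σ_{r,s ≥ 1} f_{r,s} x^r y^s with coefficients f_{r,s} = (−1)^{r+s} · (2/(r+s)) · ((2r−1)!/((r−1)!)²) · ((2s−1)!/((s−1)!)²). -/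
open Real MeasureTheory

noncomputable def aa (n : ℕ) : ℝ :=
  (-1) ^ n * ((Nat.factorial (2 * n + 1) : ℝ) / ((Nat.factorial n : ℝ)) ^ 2) / 4 ^ n

lemma fact_bound (n : ℕ) :
    Nat.factorial (2 * n) ≤ 4 ^ n * (Nat.factorial n) ^ 2 := by
  induction n with
  | zero => simp
  | succ n ih =>
    have h2 : 2 * (n + 1) = (2 * n + 1) + 1 := by ring
    rw [h2, Nat.factorial_succ, Nat.factorial_succ, Nat.factorial_succ]
    calc (2 * n + 1 + 1) * ((2 * n + 1) * (2 * n).factorial)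
        ≤ (2 * n + 2) * ((2 * n + 2) * (4 ^ n * (n.factorial) ^ 2)) := by
          have : (2 * n + 1) * (2 * n).factorial ≤ (2 * n + 2) * (4 ^ n * (n.factorial) ^ 2) :=
            Nat.mul_le_mul (by omega) ih
          exact Nat.mul_le_mul (by omega) this
      _ = 4 ^ (n + 1) * ((n + 1) * n.factorial) ^ 2 := by ring

lemma c_le (n : ℕ) :
    ((Nat.factorial (2 * n + 1) : ℝ) / ((Nat.factorial n : ℝ)) ^ 2) ≤ (2 * n + 1) * 4 ^ n := by
  have hpos : (0:ℝ) < ((Nat.factorial n : ℝ)) ^ 2 := by positivity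
  rw [div_le_iff₀ hpos]
  have hnat : Nat.factorial (2 * n + 1) ≤ ((2 * n + 1) * 4 ^ n) * (Nat.factorial n) ^ 2 := by
    rw [Nat.factorial_succ]
    calc (2 * n + 1) * (2 * n).factorial ≤ (2 * n + 1) * (4 ^ n * (n.factorial) ^ 2) :=
          Nat.mul_le_mul_left _ (fact_bound n)
      _ = ((2 * n + 1) * 4 ^ n) * (n.factorial) ^ 2 := by ring
  exact_mod_cast hnat

lemma aa_abs (n : ℕ) : |aa n| ≤ 2 * n + 1 := by
  have h4 : (0:ℝ) < 4 ^ n := by positivity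
  have hc : (0:ℝ) ≤ ((Nat.factorial (2 * n + 1) : ℝ) / ((Nat.factorial n : ℝ)) ^ 2) := by
    positivity
  rw [aa, abs_div, abs_mul, abs_pow, abs_neg, abs_one, one_pow, one_mul,
    abs_of_nonneg hc, abs_of_nonneg h4.le, div_le_iff₀ h4]
  calc ((Nat.factorial (2 * n + 1) : ℝ) / ((Nat.factorial n : ℝ)) ^ 2)
      ≤ (2 * n + 1) * 4 ^ n := c_le n
    _ = (2 * ↑n + 1) * 4 ^ n := by norm_num

lemma aa_rec (n : ℕ) : ((n : ℝ) + 1) * aa (n + 1) = -(((n : ℝ)) + 3 / 2) * aa n := by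
  have h1 : 2 * (n + 1) + 1 = (2 * n + 1) + 1 + 1 := by ring
  have hne : ((Nat.factorial n : ℝ)) ≠ 0 := by
    exact_mod_cast (Nat.factorial_pos n).ne'
  have h4 : ((4:ℝ)) ^ n ≠ 0 := by positivity
  have hfn : (Nat.factorial (n + 1) : ℝ) = (n + 1) * Nat.factorial n := by
    exact_mod_cast Nat.factorial_succ n
  rw [aa, aa, h1, Nat.factorial_succ, Nat.factorial_succ, pow_succ, hfn]
  push_cast
  field_simp
  ring

lemma summable_lin_geom {r : ℝ} (hr : |r| < 1) :
    Summable (fun n : ℕ => (2 * (n : ℝ) + 1) * r ^ n) := by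
  have hr' : ‖r‖ < 1 := by rwa [Real.norm_eq_abs]
  have h1 := summable_pow_mul_geometric_of_norm_lt_one 1 hr'
  have h0 := summable_pow_mul_geometric_of_norm_lt_one 0 hr'
  have := (h1.mul_left 2).add h0
  refine this.congr fun n => ?_
  push_cast
  ring

lemma summable_u {r : ℝ} (hr0 : 0 < r) (hr : r < 1) :
    Summable (fun n : ℕ => (2 * (n : ℝ) + 1) * ((n : ℝ) * r ^ (n - 1))) := by
  rw [← summable_nat_add_iff 1]
  have hr' : ‖r‖ < 1 := by rwa [Real.norm_eq_abs, abs_of_pos hr0]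
  have h2 := summable_pow_mul_geometric_of_norm_lt_one 2 hr'
  have h1 := summable_pow_mul_geometric_of_norm_lt_one 1 hr'
  have h0 := summable_pow_mul_geometric_of_norm_lt_one 0 hr'
  have := ((h2.mul_left 2).add (h1.mul_left 5)).add (h0.mul_left 3)
  refine this.congr fun n => ?_
  have hs : n + 1 - 1 = n := rfl
  rw [hs]
  push_cast
  ring

lemma hasSum_pow32 {z : ℝ} (hz : |z| < 1) :
    HasSum (fun n : ℕ => aa n * z ^ n) ((1 + z) ^ (-(3 / 2) : ℝ)) := by
  set r : ℝ := (|z| + 1) / 2 with hrdef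
  have habs : (0:ℝ) ≤ |z| := abs_nonneg z
  have hr0 : 0 < r := by rw [hrdef]; linarith
  have hr1 : r < 1 := by rw [hrdef]; linarith
  have hzr : |z| < r := by rw [hrdef]; linarith
  set B : Set ℝ := Metric.ball (0:ℝ) r with hBdef
  have hzB : z ∈ B := by simpa [hBdef, Real.norm_eq_abs] using hzr
  have h0B : (0:ℝ) ∈ B := Metric.mem_ball_self hr0
  -- summability of the series on the ball
  have hSsum : ∀ w ∈ B, Summable fun n : ℕ => aa n * w ^ n := by
    intro w hw
    have hwr : |w| < r := by simpa [hBdef, Real.norm_eq_abs] using hw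
    refine Summable.of_norm ?_
    refine Summable.of_nonneg_of_le (fun n => norm_nonneg _) (fun n => ?_)
      (summable_lin_geom (r := r) (by rwa [abs_of_pos hr0]))
    rw [Real.norm_eq_abs, abs_mul, abs_pow]
    have h1 : |aa n| ≤ 2 * (n:ℝ) + 1 := aa_abs n
    have h2 : |w| ^ n ≤ r ^ n := pow_le_pow_left₀ (abs_nonneg w) hwr.le n
    have h3 : (0:ℝ) ≤ r ^ n := by positivity
    exact mul_le_mul h1 h2 (by positivity) (by positivity)
  -- derivative of the series on the ball
  have hu := summable_u hr0 hr1
  have hg : ∀ (n : ℕ), ∀ w ∈ B, HasDerivAt (fun w : ℝ => aa n * w ^ n)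
      (aa n * ((n : ℝ) * w ^ (n - 1))) w :=
    fun n w _ => (hasDerivAt_pow n w).const_mul (aa n)
  have hg' : ∀ (n : ℕ), ∀ w ∈ B, ‖aa n * ((n : ℝ) * w ^ (n - 1))‖ ≤
      (2 * (n : ℝ) + 1) * ((n : ℝ) * r ^ (n - 1)) := by
    intro n w hw
    have hwr : |w| < r := by simpa [hBdef, Real.norm_eq_abs] using hw
    rw [Real.norm_eq_abs, abs_mul, abs_mul, abs_pow, Nat.abs_cast]
    have h2 : |w| ^ (n-1) ≤ r ^ (n-1) := pow_le_pow_left₀ (abs_nonneg w) hwr.le _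
    exact mul_le_mul (aa_abs n)
      (mul_le_mul le_rfl h2 (by positivity) (by positivity)) (by positivity) (by positivity)
  have hg0 : Summable fun n : ℕ => aa n * (0:ℝ) ^ n := by
    apply summable_of_ne_finset_zero (s := {0})
    intro n hn
    simp only [Finset.mem_singleton] at hn
    simp [zero_pow hn]
  have hkey : ∀ w ∈ B, HasDerivAt (fun w : ℝ => ∑' n : ℕ, aa n * w ^ n)
      (∑' n : ℕ, aa n * ((n : ℝ) * w ^ (n - 1))) w := by
    intro w hw
    exact hasDerivAt_tsum_of_isPreconnected hu Metric.isOpen_ball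
      (convex_ball (0:ℝ) r).isPreconnected hg hg' h0B hg0 hw
  set S : ℝ → ℝ := fun w => ∑' n : ℕ, aa n * w ^ n with hSdef
  set T : ℝ → ℝ := fun w => ∑' n : ℕ, aa n * ((n : ℝ) * w ^ (n - 1)) with hTdef
  -- the ODE satisfied by the sum
  have hODE : ∀ w ∈ B, (1 + w) * T w = -(3/2) * S w := by
    intro w hw
    have hwr : |w| < r := by simpa [hBdef, Real.norm_eq_abs] using hw
    have hTsum : Summable fun n : ℕ => aa n * ((n : ℝ) * w ^ (n - 1)) := by
      refine Summable.of_norm ?_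
      refine Summable.of_nonneg_of_le (fun n => norm_nonneg _) (fun n => hg' n w hw) hu
    have hT : HasSum (fun n : ℕ => aa n * ((n : ℝ) * w ^ (n - 1))) (T w) := hTsum.hasSum
    have hT1 : HasSum (fun n : ℕ => aa (n+1) * (((n:ℝ) + 1) * w ^ n)) (T w) := by
      have h2 : HasSum (fun n : ℕ => aa n * ((n : ℝ) * w ^ (n - 1)))
          (T w + ∑ i ∈ Finset.range 1, aa i * ((i : ℝ) * w ^ (i - 1))) := by
        simpa using hT
      have h3 := (hasSum_nat_add_iff 1).mpr h2
      refine h3.congr_fun fun n => ?_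
      push_cast
      rfl
    have hwT : HasSum (fun n : ℕ => (n : ℝ) * aa n * w ^ n) (w * T w) := by
      have h := hT.mul_left w
      refine h.congr_fun fun n => ?_
      cases n with
      | zero => simp
      | succ m =>
        have : (m + 1) - 1 = m := rfl
        rw [this]
        push_cast
        ring
    have hcomb := hT1.add hwT
    have hS3 : HasSum (fun n : ℕ => -(3/2) * (aa n * w ^ n)) (-(3/2) * S w) :=
      (hSsum w hw).hasSum.mul_left _
    have hcomb' : HasSum (fun n : ℕ => -(3/2) * (aa n * w ^ n)) (T w + w * T w) := by
      refine hcomb.congr_fun fun n => ?_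
      have hrec := aa_rec n
      linarith [congrArg (fun q : ℝ => q * w ^ n) hrec, mul_comm (aa (n+1)) (((n:ℝ)+1) * w ^ n)]
    have := hcomb'.unique hS3
    nlinarith [this]
  -- the auxiliary function S w * (1+w)^(3/2) is constant on the ball
  set F : ℝ → ℝ := fun w => S w * (1 + w) ^ ((3:ℝ)/2) with hFdef
  have hwpos : ∀ w ∈ B, 0 < 1 + w := by
    intro w hw
    have hwr : |w| < r := by simpa [hBdef, Real.norm_eq_abs] using hw
    have := abs_lt.mp hwr
    linarith
  have hF' : ∀ w ∈ B, HasDerivAt F 0 w := by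
    intro w hw
    have h1w := hwpos w hw
    have hlin : HasDerivAt (fun w : ℝ => 1 + w) 1 w := by
      simpa using (hasDerivAt_id w).const_add (1:ℝ)
    have hrp : HasDerivAt (fun w : ℝ => (1 + w) ^ ((3:ℝ)/2))
        (1 * ((3:ℝ)/2) * (1 + w) ^ ((3:ℝ)/2 - 1)) w :=
      hlin.rpow_const (Or.inl h1w.ne')
    have hmul := (hkey w hw).mul hrp
    have hmul' : HasDerivAt F ((T w) * (1 + w) ^ ((3:ℝ)/2) +
        S w * (1 * ((3:ℝ)/2) * (1 + w) ^ ((3:ℝ)/2 - 1))) w := hmul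
    have hzero : T w * (1 + w) ^ ((3:ℝ)/2) + S w * (1 * ((3:ℝ)/2) * (1 + w) ^ ((3:ℝ)/2 - 1)) = 0 := by
      have hsplit : (1 + w) ^ ((3:ℝ)/2) = (1 + w) * (1 + w) ^ ((3:ℝ)/2 - 1) := by
        rw [← Real.rpow_one_add' h1w.le (by norm_num)]
        norm_num
      rw [hsplit]
      have hode := hODE w hw
      linear_combination ((1 + w) ^ ((3:ℝ)/2 - 1)) * hode
    rw [hzero] at hmul'
    exact hmul'
  have hconst : F z = F 0 := by
    have hdiff : DifferentiableOn ℝ F B :=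
      fun w hw => ((hF' w hw).differentiableAt).differentiableWithinAt
    refine (convex_ball (0:ℝ) r).is_const_of_fderivWithin_eq_zero hdiff ?_ hzB h0B
    intro w hw
    rw [fderivWithin_eq_fderiv (Metric.isOpen_ball.uniqueDiffWithinAt hw)
      (hF' w hw).differentiableAt]
    have := (hF' w hw).hasFDerivAt.fderiv
    rw [this]
    ext v
    simp
  -- compute F 0 = 1
  have hS0 : S 0 = 1 := by
    have h1 : HasSum (fun n : ℕ => aa n * (0:ℝ) ^ n) ((fun n : ℕ => aa n * (0:ℝ) ^ n) 0) := by
      refine hasSum_single 0 fun b hb => ?_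
      simp [zero_pow hb]
    have h2 : S 0 = aa 0 * (0:ℝ) ^ 0 := h1.tsum_eq
    rw [h2]
    simp [aa, Nat.factorial]
  have hF0 : F 0 = 1 := by
    rw [hFdef]
    simp only
    rw [hS0]
    norm_num
  have hFz : S z * (1 + z) ^ ((3:ℝ)/2) = 1 := by
    have := hconst
    rw [hF0] at this
    exact this
  have h1z : 0 < 1 + z := hwpos z hzB
  have hSz : S z = (1 + z) ^ (-(3/2) : ℝ) := by
    rw [Real.rpow_neg h1z.le, inv_eq_one_div, eq_div_iff (by positivity)]
    exact hFz
  have := (hSsum z hzB).hasSum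
  rwa [show (∑' n : ℕ, aa n * z ^ n) = S z from rfl, hSz] at this

lemma pos_aux {x t : ℝ} (hx : |x| < 1/4) (ht0 : 0 ≤ t) (ht1 : t ≤ 1) :
    0 < 1 + 4 * t * x := by
  have h1 : |4 * t * x| ≤ 4 * |x| := by
    rw [abs_mul, abs_mul]
    have : |(4:ℝ)| = 4 := by norm_num
    rw [this, abs_of_nonneg ht0, mul_assoc]
    have : t * |x| ≤ 1 * |x| := mul_le_mul_of_nonneg_right ht1 (abs_nonneg x)
    nlinarith [abs_nonneg x]
  have h2 := neg_abs_le (4 * t * x)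
  linarith

lemma integral_eval (x y : ℝ) (hx : |x| < 1/4) (hy : |y| < 1/4) (hxy : x ≠ y) :
    (∫ t in (0:ℝ)..1, t * (1 + 4 * t * x) ^ (-(3/2) : ℝ) * (1 + 4 * t * y) ^ (-(3/2) : ℝ))
      = (1 + 2*x + 2*y - Real.sqrt (1 + 4*x) * Real.sqrt (1 + 4*y)) /
        (4 * Real.sqrt (1 + 4*x) * Real.sqrt (1 + 4*y) * (x - y)^2) := by
  have hxyne : x - y ≠ 0 := sub_ne_zero.mpr hxy
  set α : ℝ := 1 / (4 * (x - y)^2) with hαdef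
  set β : ℝ := (x + y) / (2 * (x - y)^2) with hβdef
  set Φ : ℝ → ℝ := fun t => (α + β * t) * (1 + 4 * t * x) ^ (-(1/2) : ℝ) *
      (1 + 4 * t * y) ^ (-(1/2) : ℝ) with hΦdef
  have huIcc : Set.uIcc (0:ℝ) 1 = Set.Icc 0 1 := Set.uIcc_of_le zero_le_one
  have hderiv : ∀ t ∈ Set.uIcc (0:ℝ) 1, HasDerivAt Φ
      (t * (1 + 4 * t * x) ^ (-(3/2) : ℝ) * (1 + 4 * t * y) ^ (-(3/2) : ℝ)) t := by
    intro t ht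
    rw [huIcc] at ht
    have hux : 0 < 1 + 4 * t * x := pos_aux hx ht.1 ht.2
    have huy : 0 < 1 + 4 * t * y := pos_aux hy ht.1 ht.2
    have hlinx : HasDerivAt (fun t : ℝ => 1 + 4 * t * x) (4 * x) t := by
      simpa using (((hasDerivAt_id t).const_mul (4:ℝ)).mul_const x).const_add (1:ℝ)
    have hliny : HasDerivAt (fun t : ℝ => 1 + 4 * t * y) (4 * y) t := by
      simpa using (((hasDerivAt_id t).const_mul (4:ℝ)).mul_const y).const_add (1:ℝ)
    have hrx : HasDerivAt (fun t : ℝ => (1 + 4 * t * x) ^ (-(1/2) : ℝ))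
        ((4 * x) * (-(1/2)) * (1 + 4 * t * x) ^ ((-(1/2) : ℝ) - 1)) t :=
      hlinx.rpow_const (Or.inl hux.ne')
    have hry : HasDerivAt (fun t : ℝ => (1 + 4 * t * y) ^ (-(1/2) : ℝ))
        ((4 * y) * (-(1/2)) * (1 + 4 * t * y) ^ ((-(1/2) : ℝ) - 1)) t :=
      hliny.rpow_const (Or.inl huy.ne')
    have hab : HasDerivAt (fun t : ℝ => α + β * t) β t := by
      simpa using ((hasDerivAt_id t).const_mul β).const_add α
    have hmul := (hab.mul hrx).mul hry
    have hexp : ((-(1/2) : ℝ)) - 1 = -(3/2) := by norm_num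
    rw [hexp] at hmul
    refine (hmul.congr_deriv ?_ : HasDerivAt Φ _ t)
    simp only [Pi.mul_apply]
    have hsx : (1 + 4 * t * x) ^ (-(1/2) : ℝ) = (1 + 4 * t * x) * (1 + 4 * t * x) ^ (-(3/2) : ℝ) := by
      rw [← Real.rpow_one_add' hux.le (by norm_num)]
      norm_num
    have hsy : (1 + 4 * t * y) ^ (-(1/2) : ℝ) = (1 + 4 * t * y) * (1 + 4 * t * y) ^ (-(3/2) : ℝ) := by
      rw [← Real.rpow_one_add' huy.le (by norm_num)]
      norm_num
    rw [hsx, hsy, hαdef, hβdef]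
    field_simp
    ring
  have hcont : ContinuousOn (fun t : ℝ => t * (1 + 4 * t * x) ^ (-(3/2) : ℝ) *
      (1 + 4 * t * y) ^ (-(3/2) : ℝ)) (Set.uIcc (0:ℝ) 1) := by
    rw [huIcc]
    have hcx : ContinuousOn (fun t : ℝ => (1 + 4 * t * x) ^ (-(3/2) : ℝ)) (Set.Icc 0 1) := by
      apply ContinuousOn.rpow_const
      · fun_prop
      · intro t ht
        exact Or.inl (pos_aux hx ht.1 ht.2).ne'
    have hcy : ContinuousOn (fun t : ℝ => (1 + 4 * t * y) ^ (-(3/2) : ℝ)) (Set.Icc 0 1) := by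
      apply ContinuousOn.rpow_const
      · fun_prop
      · intro t ht
        exact Or.inl (pos_aux hy ht.1 ht.2).ne'
    exact (continuousOn_id.mul hcx).mul hcy
  have hint : (∫ t in (0:ℝ)..1, t * (1 + 4 * t * x) ^ (-(3/2) : ℝ) * (1 + 4 * t * y) ^ (-(3/2) : ℝ))
      = Φ 1 - Φ 0 := by
    refine intervalIntegral.integral_eq_sub_of_hasDerivAt hderiv ?_
    exact hcont.intervalIntegrable
  rw [hint]
  have h1x : (0:ℝ) < 1 + 4 * x := by have := abs_lt.mp hx; linarith
  have h1y : (0:ℝ) < 1 + 4 * y := by have := abs_lt.mp hy; linarith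
  have hsqx : 0 < Real.sqrt (1 + 4 * x) := Real.sqrt_pos.mpr h1x
  have hsqy : 0 < Real.sqrt (1 + 4 * y) := Real.sqrt_pos.mpr h1y
  have hr1 : (1 + 4 * (1:ℝ) * x) ^ (-(1/2) : ℝ) = (Real.sqrt (1 + 4 * x))⁻¹ := by
    rw [show (1 + 4 * (1:ℝ) * x) = 1 + 4 * x by ring, Real.rpow_neg h1x.le,
      Real.sqrt_eq_rpow]
  have hr2 : (1 + 4 * (1:ℝ) * y) ^ (-(1/2) : ℝ) = (Real.sqrt (1 + 4 * y))⁻¹ := by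
    rw [show (1 + 4 * (1:ℝ) * y) = 1 + 4 * y by ring, Real.rpow_neg h1y.le,
      Real.sqrt_eq_rpow]
  have hΦ1 : Φ 1 = (α + β) * (Real.sqrt (1 + 4 * x))⁻¹ * (Real.sqrt (1 + 4 * y))⁻¹ := by
    rw [hΦdef]
    simp only
    rw [hr1, hr2]
    ring
  have hΦ0 : Φ 0 = α := by
    rw [hΦdef]
    simp only
    norm_num
  rw [hΦ1, hΦ0, hαdef, hβdef]
  field_simp
  ring

noncomputable def cc (n : ℕ) : ℝ := (Nat.factorial (2 * n + 1) : ℝ) / ((Nat.factorial n : ℝ)) ^ 2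

lemma cc_nonneg (n : ℕ) : 0 ≤ cc n := by rw [cc]; positivity

noncomputable def Ff (x y : ℝ) (rs : ℕ × ℕ) (t : ℝ) : ℝ :=
  2 * ((-1:ℝ)^rs.1 * cc rs.1 * x^(rs.1+1)) * ((-1:ℝ)^rs.2 * cc rs.2 * y^(rs.2+1))
    * t^(rs.1+rs.2+1)

noncomputable def Tt (x y : ℝ) (rs : ℕ × ℕ) : ℝ :=
  (-1 : ℝ) ^ (rs.1 + rs.2) * (2 / ((rs.1 : ℝ) + (rs.2 : ℝ) + 2)) * cc rs.1 * cc rs.2 *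
    x ^ (rs.1 + 1) * y ^ (rs.2 + 1)

lemma Tt_eq_integral (x y : ℝ) (n m : ℕ) :
    Tt x y (n, m) = ∫ t in (0:ℝ)..1, Ff x y (n, m) t := by
  simp only [Tt, Ff]
  rw [intervalIntegral.integral_const_mul, integral_pow]
  have hne : ((n:ℝ) + (m:ℝ) + 2) ≠ 0 := by positivity
  have hcast : ((n + m + 1 : ℕ) : ℝ) + 1 = (n:ℝ) + (m:ℝ) + 2 := by push_cast; ring
  rw [hcast, pow_add ((-1:ℝ)) n m]
  field_simp
  ring

lemma Ff_integrableOn (x y : ℝ) (rs : ℕ × ℕ) :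
    MeasureTheory.IntegrableOn (Ff x y rs) (Set.Ioc (0:ℝ) 1) := by
  apply Continuous.integrableOn_Ioc
  exact continuous_const.mul (continuous_pow _)

lemma Ff_norm_integral_le (x y : ℝ) (rs : ℕ × ℕ) :
    (∫ t in Set.Ioc (0:ℝ) 1, ‖Ff x y rs t‖) ≤
      (2 * (cc rs.1 * |x| ^ (rs.1 + 1))) * (cc rs.2 * |y| ^ (rs.2 + 1)) := by
  obtain ⟨n, m⟩ := rs
  have hb : ∀ t ∈ Set.Ioc (0:ℝ) 1, ‖Ff x y (n, m) t‖ ≤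
      (2 * (cc n * |x| ^ (n + 1))) * (cc m * |y| ^ (m + 1)) := by
    intro t ht
    simp only [Ff, Real.norm_eq_abs, abs_mul, abs_pow, abs_neg, abs_one, one_pow, one_mul]
    rw [abs_of_nonneg (cc_nonneg n), abs_of_nonneg (cc_nonneg m)]
    have ht1 : |t| ≤ 1 := by rw [abs_of_pos ht.1]; exact ht.2
    have htp : |t| ^ (n + m + 1) ≤ 1 := pow_le_one₀ (abs_nonneg t) ht1
    have h2 : |(2:ℝ)| = 2 := by norm_num
    rw [h2]
    have hrest : (0:ℝ) ≤ 2 * cc n * |x| ^ (n + 1) * (cc m * |y| ^ (m + 1)) := by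
      simp only [cc]; positivity
    nlinarith [htp, hrest]
  calc (∫ t in Set.Ioc (0:ℝ) 1, ‖Ff x y (n, m) t‖)
      ≤ ∫ _ in Set.Ioc (0:ℝ) 1, (2 * (cc n * |x| ^ (n + 1))) * (cc m * |y| ^ (m + 1)) := by
        apply MeasureTheory.setIntegral_mono_on ((Ff_integrableOn x y (n, m)).norm) _
          measurableSet_Ioc hb
        exact MeasureTheory.integrableOn_const (by simp)
    _ = (2 * (cc n * |x| ^ (n + 1))) * (cc m * |y| ^ (m + 1)) := by
        rw [MeasureTheory.setIntegral_const]
        simp [Real.volume_Ioc]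

lemma summable_cc {q : ℝ} (hq : |q| < 1/4) :
    Summable (fun n : ℕ => cc n * |q|^(n+1)) := by
  have h4q : abs (4 * |q|) < 1 := by
    rw [abs_mul, abs_abs]
    have h1 : |(4:ℝ)| = 4 := by norm_num
    rw [h1]
    linarith
  have hbound := (summable_lin_geom h4q).mul_left |q|
  refine Summable.of_nonneg_of_le (fun n => by simp only [cc]; positivity) (fun n => ?_) hbound
  calc cc n * |q|^(n+1)
      ≤ ((2*(n:ℝ)+1) * 4^n) * |q|^(n+1) := by
        apply mul_le_mul_of_nonneg_right _ (by positivity)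
        calc cc n ≤ (2*n+1) * 4^n := c_le n
          _ = (2*(n:ℝ)+1) * 4^n := by norm_num
    _ = |q| * ((2*(n:ℝ)+1) * (4*|q|)^n) := by
        rw [mul_pow, pow_succ]
        ring


set_option maxHeartbeats 1000000

lemma hasSum_factor {q : ℝ} (hq : |q| < 1/4) :
    HasSum (fun n : ℕ => (-1:ℝ)^n * cc n * q^(n+1)) (q * (1 + 4*q) ^ (-(3/2) : ℝ)) := by
  have h4q : |4*q| < 1 := by
    rw [abs_mul]
    have h1 : |(4:ℝ)| = 4 := by norm_num
    rw [h1]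
    linarith
  have h := (hasSum_pow32 h4q).mul_left q
  refine h.congr_fun fun n => ?_
  rw [aa, cc, mul_pow]
  have h4 : ((4:ℝ))^n ≠ 0 := by positivity
  field_simp
  ring

lemma summable_bound_prod {x y : ℝ} (hx : |x| < 1/4) (hy : |y| < 1/4) :
    Summable (fun rs : ℕ × ℕ =>
      (2 * (cc rs.1 * |x| ^ (rs.1 + 1))) * (cc rs.2 * |y| ^ (rs.2 + 1))) := by
  have h1 : Summable (fun n : ℕ => 2 * (cc n * |x| ^ (n+1))) := (summable_cc hx).mul_left 2
  have h2 : Summable (fun m : ℕ => cc m * |y| ^ (m+1)) := summable_cc hy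
  exact h1.mul_of_nonneg h2 (fun n => by simp only [cc]; positivity)
    (fun m => by simp only [cc]; positivity)

lemma Tt_abs_le (x y : ℝ) (rs : ℕ × ℕ) :
    |Tt x y rs| ≤ (2 * (cc rs.1 * |x| ^ (rs.1 + 1))) * (cc rs.2 * |y| ^ (rs.2 + 1)) := by
  obtain ⟨n, m⟩ := rs
  simp only [Tt, abs_mul, abs_pow, abs_neg, abs_one, one_pow, one_mul]
  rw [abs_of_nonneg (cc_nonneg n), abs_of_nonneg (cc_nonneg m)]
  have hd : |2 / ((n : ℝ) + (m : ℝ) + 2)| ≤ 2 := by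
    rw [abs_div]
    have h2 : |((n:ℝ) + (m:ℝ) + 2)| = (n:ℝ) + (m:ℝ) + 2 := abs_of_pos (by positivity)
    have h3 : |(2:ℝ)| = 2 := by norm_num
    rw [h2, h3, div_le_iff₀ (by positivity)]
    nlinarith [Nat.cast_nonneg (α := ℝ) n, Nat.cast_nonneg (α := ℝ) m]
  have hrest : (0:ℝ) ≤ cc n * cc m * |x| ^ (n + 1) * |y| ^ (m + 1) := by
    simp only [cc]; positivity
  nlinarith [hd, hrest]

lemma tsum_Ff_eq (x y : ℝ) (hx : |x| < 1/4) (hy : |y| < 1/4) {t : ℝ}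
    (ht : t ∈ Set.Ioc (0:ℝ) 1) :
    (∑' rs : ℕ × ℕ, Ff x y rs t)
      = 2*x*y * (t * (1 + 4*t*x) ^ (-(3/2) : ℝ) * (1 + 4*t*y) ^ (-(3/2) : ℝ)) := by
  have ht0 : 0 < t := ht.1
  have ht1 : t ≤ 1 := ht.2
  have htabs : |t| ≤ 1 := by rw [abs_of_pos ht0]; exact ht1
  have hqx : |t*x| < 1/4 := by
    rw [abs_mul]
    calc |t| * |x| ≤ 1 * |x| := mul_le_mul_of_nonneg_right htabs (abs_nonneg x)
      _ = |x| := by ring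
      _ < 1/4 := hx
  have hqy : |t*y| < 1/4 := by
    rw [abs_mul]
    calc |t| * |y| ≤ 1 * |y| := mul_le_mul_of_nonneg_right htabs (abs_nonneg y)
      _ = |y| := by ring
      _ < 1/4 := hy
  have hP : HasSum (fun n : ℕ => (-1:ℝ)^n * cc n * (t*x)^(n+1))
      ((t*x) * (1 + 4*(t*x)) ^ (-(3/2) : ℝ)) := hasSum_factor hqx
  have hQ : HasSum (fun m : ℕ => (-1:ℝ)^m * cc m * (t*y)^(m+1))
      ((t*y) * (1 + 4*(t*y)) ^ (-(3/2) : ℝ)) := hasSum_factor hqy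
  have hnP : Summable fun n : ℕ => ‖(-1:ℝ)^n * cc n * (t*x)^(n+1)‖ := by
    refine (summable_cc hqx).congr fun n => ?_
    simp only [Real.norm_eq_abs, abs_mul, abs_pow, abs_neg, abs_one, one_pow, one_mul,
      abs_of_nonneg (cc_nonneg n)]
  have hnQ : Summable fun m : ℕ => ‖(-1:ℝ)^m * cc m * (t*y)^(m+1)‖ := by
    refine (summable_cc hqy).congr fun m => ?_
    simp only [Real.norm_eq_abs, abs_mul, abs_pow, abs_neg, abs_one, one_pow, one_mul,
      abs_of_nonneg (cc_nonneg m)]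
  have hprod : Summable (fun rs : ℕ × ℕ =>
      ((-1:ℝ)^rs.1 * cc rs.1 * (t*x)^(rs.1+1)) * ((-1:ℝ)^rs.2 * cc rs.2 * (t*y)^(rs.2+1))) :=
    summable_mul_of_summable_norm hnP hnQ
  have hval : (∑' rs : ℕ × ℕ,
      ((-1:ℝ)^rs.1 * cc rs.1 * (t*x)^(rs.1+1)) * ((-1:ℝ)^rs.2 * cc rs.2 * (t*y)^(rs.2+1)))
      = ((t*x) * (1 + 4*(t*x)) ^ (-(3/2) : ℝ)) * ((t*y) * (1 + 4*(t*y)) ^ (-(3/2) : ℝ)) :=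
    (hP.mul_eq hQ hprod.hasSum).symm
  have hFeq : ∀ rs : ℕ × ℕ, Ff x y rs t = (2/t) *
      (((-1:ℝ)^rs.1 * cc rs.1 * (t*x)^(rs.1+1)) * ((-1:ℝ)^rs.2 * cc rs.2 * (t*y)^(rs.2+1))) := by
    intro ⟨n, m⟩
    simp only [Ff]
    rw [mul_pow, mul_pow]
    field_simp
    ring
  calc (∑' rs : ℕ × ℕ, Ff x y rs t)
      = ∑' rs : ℕ × ℕ, (2/t) *
          (((-1:ℝ)^rs.1 * cc rs.1 * (t*x)^(rs.1+1)) * ((-1:ℝ)^rs.2 * cc rs.2 * (t*y)^(rs.2+1))) :=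
        tsum_congr hFeq
    _ = (2/t) * (((t*x) * (1 + 4*(t*x)) ^ (-(3/2) : ℝ)) *
          ((t*y) * (1 + 4*(t*y)) ^ (-(3/2) : ℝ))) := by rw [tsum_mul_left, hval]
    _ = 2*x*y * (t * (1 + 4*t*x) ^ (-(3/2) : ℝ) * (1 + 4*t*y) ^ (-(3/2) : ℝ)) := by
        rw [show (1:ℝ) + 4*(t*x) = 1 + 4*t*x from by ring,
          show (1:ℝ) + 4*(t*y) = 1 + 4*t*y from by ring]
        field_simp


/-- the function
`f(x,y) = xy(1+2x+2y−√(1+4x)√(1+4y)) / (2√(1+4x)√(1+4y)(x−y)²)`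
has on `|x| < 1/4`, `|y| < 1/4`, `x ≠ y` the absolutely convergent expansion
`Σ_{r,s ≥ 1} f_{r,s} x^r y^s` with
`f_{r,s} = (−1)^{r+s} (2/(r+s)) ((2r−1)!/((r−1)!)²)((2s−1)!/((s−1)!)²)`
(indexed here by `r = rs.1 + 1`, `s = rs.2 + 1`). -/
theorem stmt15 (x y : ℝ) (hx : |x| < 1 / 4) (hy : |y| < 1 / 4) (hxy : x ≠ y) :
    Summable (fun rs : ℕ × ℕ =>
      |(-1 : ℝ) ^ (rs.1 + rs.2) * (2 / ((rs.1 : ℝ) + (rs.2 : ℝ) + 2)) *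
        ((Nat.factorial (2 * rs.1 + 1) : ℝ) / ((Nat.factorial rs.1 : ℝ)) ^ 2) *
        ((Nat.factorial (2 * rs.2 + 1) : ℝ) / ((Nat.factorial rs.2 : ℝ)) ^ 2) *
        x ^ (rs.1 + 1) * y ^ (rs.2 + 1)|) ∧
    (∑' rs : ℕ × ℕ, (-1 : ℝ) ^ (rs.1 + rs.2) * (2 / ((rs.1 : ℝ) + (rs.2 : ℝ) + 2)) *
        ((Nat.factorial (2 * rs.1 + 1) : ℝ) / ((Nat.factorial rs.1 : ℝ)) ^ 2) *
        ((Nat.factorial (2 * rs.2 + 1) : ℝ) / ((Nat.factorial rs.2 : ℝ)) ^ 2) *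
        x ^ (rs.1 + 1) * y ^ (rs.2 + 1)) =
      x * y * (1 + 2 * x + 2 * y - Real.sqrt (1 + 4 * x) * Real.sqrt (1 + 4 * y)) /
        (2 * Real.sqrt (1 + 4 * x) * Real.sqrt (1 + 4 * y) * (x - y) ^ 2) := by
  have hkey : (fun rs : ℕ × ℕ => (-1 : ℝ) ^ (rs.1 + rs.2) * (2 / ((rs.1 : ℝ) + (rs.2 : ℝ) + 2)) *
        ((Nat.factorial (2 * rs.1 + 1) : ℝ) / ((Nat.factorial rs.1 : ℝ)) ^ 2) *
        ((Nat.factorial (2 * rs.2 + 1) : ℝ) / ((Nat.factorial rs.2 : ℝ)) ^ 2) *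
        x ^ (rs.1 + 1) * y ^ (rs.2 + 1)) = Tt x y := rfl
  rw [hkey]
  have hsummable_absT : Summable fun rs : ℕ × ℕ => |Tt x y rs| :=
    Summable.of_nonneg_of_le (fun rs => abs_nonneg _) (Tt_abs_le x y)
      (summable_bound_prod hx hy)
  refine ⟨hsummable_absT, ?_⟩
  have hNorm : Summable fun rs : ℕ × ℕ => ∫ t in Set.Ioc (0:ℝ) 1, ‖Ff x y rs t‖ := by
    refine Summable.of_nonneg_of_le (fun rs => ?_) (Ff_norm_integral_le x y)
      (summable_bound_prod hx hy)
    exact MeasureTheory.integral_nonneg fun t => norm_nonneg _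
  have hswap : ∑' rs : ℕ × ℕ, (∫ t in Set.Ioc (0:ℝ) 1, Ff x y rs t)
      = ∫ t in Set.Ioc (0:ℝ) 1, (∑' rs : ℕ × ℕ, Ff x y rs t) :=
    MeasureTheory.integral_tsum_of_summable_integral_norm (Ff_integrableOn x y) hNorm
  have h1x : (0:ℝ) < 1 + 4 * x := by have := abs_lt.mp hx; linarith
  have h1y : (0:ℝ) < 1 + 4 * y := by have := abs_lt.mp hy; linarith
  have hsqx : 0 < Real.sqrt (1 + 4 * x) := Real.sqrt_pos.mpr h1x
  have hsqy : 0 < Real.sqrt (1 + 4 * y) := Real.sqrt_pos.mpr h1y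
  have hxyne : x - y ≠ 0 := sub_ne_zero.mpr hxy
  calc (∑' rs : ℕ × ℕ, Tt x y rs)
      = ∑' rs : ℕ × ℕ, (∫ t in (0:ℝ)..1, Ff x y rs t) := by
        refine tsum_congr fun rs => ?_
        obtain ⟨n, m⟩ := rs
        exact Tt_eq_integral x y n m
    _ = ∑' rs : ℕ × ℕ, (∫ t in Set.Ioc (0:ℝ) 1, Ff x y rs t) := by
        refine tsum_congr fun rs => ?_
        rw [intervalIntegral.integral_of_le zero_le_one]
    _ = ∫ t in Set.Ioc (0:ℝ) 1, (∑' rs : ℕ × ℕ, Ff x y rs t) := hswap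
    _ = ∫ t in Set.Ioc (0:ℝ) 1,
          2*x*y * (t * (1 + 4*t*x) ^ (-(3/2) : ℝ) * (1 + 4*t*y) ^ (-(3/2) : ℝ)) :=
        MeasureTheory.setIntegral_congr_fun measurableSet_Ioc
          (fun t ht => tsum_Ff_eq x y hx hy ht)
    _ = 2*x*y * ∫ t in Set.Ioc (0:ℝ) 1,
          (t * (1 + 4*t*x) ^ (-(3/2) : ℝ) * (1 + 4*t*y) ^ (-(3/2) : ℝ)) := by
        rw [MeasureTheory.integral_const_mul]
    _ = 2*x*y * ∫ t in (0:ℝ)..1,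
          (t * (1 + 4*t*x) ^ (-(3/2) : ℝ) * (1 + 4*t*y) ^ (-(3/2) : ℝ)) := by
        rw [intervalIntegral.integral_of_le zero_le_one]
    _ = 2*x*y * ((1 + 2*x + 2*y - Real.sqrt (1 + 4*x) * Real.sqrt (1 + 4*y)) /
          (4 * Real.sqrt (1 + 4*x) * Real.sqrt (1 + 4*y) * (x - y)^2)) := by
        rw [integral_eval x y hx hy hxy]
    _ = x * y * (1 + 2 * x + 2 * y - Real.sqrt (1 + 4 * x) * Real.sqrt (1 + 4 * y)) /
          (2 * Real.sqrt (1 + 4 * x) * Real.sqrt (1 + 4 * y) * (x - y) ^ 2) := by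
        field_simp
        ring
end
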